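/- arXiv:1805.11982 — 7 statements merged into one kernel-verified Lean document; each statement's English description precedes it below -/
import Mathlib

section
/- Let R be a ring and Σ = {σ₁,…,σₙ} a finite family of ring endomorphisms of R. Then R is Σ-rigid if and only if R is weak Σ-rigid and reduced. -/
/-- For `θ ∈ ℕⁿ`, `sigmaPow σ θ = σ₁^{θ₁} ∘ σ₂^{θ₂} ∘ ⋯ ∘ σₙ^{θₙ}` (so `σₙ` is applied first). -/
def sigmaPow {R : Type*} [Ring R] {n : ℕ} (σ : Fin n → R →+* R) (θ : Fin n → ℕ) : R → R :=
  fun r => Fin.foldr n (fun i x => (σ i)^[θ i] x) r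

lemma sigmaPow_zero {R : Type*} [Ring R] : ∀ {n : ℕ} (σ : Fin n → R →+* R) (r : R),
    sigmaPow σ (fun _ => 0) r = r := by
  intro n
  induction n with
  | zero => intro σ r; simp [sigmaPow]
  | succ m ih =>
    intro σ r
    simp only [sigmaPow, Fin.foldr_succ, Function.iterate_zero, id_eq] at *
    exact ih (fun i => σ i.succ) r

/-- `R` is `Σ`-rigid if and only if `R` is weak `Σ`-rigid and reduced. -/
theorem stmt_2 {R : Type*} [Ring R] {n : ℕ} (σ : Fin n → R →+* R) :
    (∀ (r : R) (θ : Fin n → ℕ), r * sigmaPow σ θ r = 0 → r = 0) ↔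
      ((∀ (a : R) (θ : Fin n → ℕ), IsNilpotent (a * sigmaPow σ θ a) ↔ IsNilpotent a) ∧
        IsReduced R) := by
  constructor
  · intro h
    have h2 : ∀ x : R, x * x = 0 → x = 0 := by
      intro x hx
      exact h x (fun _ => 0) (by rw [sigmaPow_zero]; exact hx)
    have key : ∀ k, ∀ x : R, x ^ k = 0 → x = 0 := by
      intro k
      induction k using Nat.strong_induction_on with
      | _ k ih =>
        intro x hx
        match k with
        | 0 =>
          rw [pow_zero] at hx
          calc x = x * 1 := (mul_one x).symm
            _ = x * 0 := by rw [hx]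
            _ = 0 := mul_zero x
        | 1 => simpa using hx
        | (m + 2) =>
          have hsq : x ^ (m + 1) * x ^ (m + 1) = 0 := by
            rw [← pow_add]
            have he : (m + 1) + (m + 1) = (m + 2) + m := by ring
            rw [he, pow_add, hx, zero_mul]
          exact ih (m + 1) (by omega) x (h2 _ hsq)
    have hred : IsReduced R := ⟨fun x ⟨k, hk⟩ => key k x hk⟩
    refine ⟨fun a θ => ?_, hred⟩
    constructor
    · intro hnil
      have h0 : a * sigmaPow σ θ a = 0 := hred.eq_zero _ hnil
      have : a = 0 := h a θ h0
      exact this ▸ IsNilpotent.zero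
    · intro hnil
      have : a = 0 := hred.eq_zero _ hnil
      rw [this, zero_mul]
      exact IsNilpotent.zero
  · rintro ⟨hw, hred⟩ r θ hr
    have : IsNilpotent (r * sigmaPow σ θ r) := by rw [hr]; exact IsNilpotent.zero
    exact hred.eq_zero _ ((hw r θ).mp this)
end

section
/- Let R be an NI ring which is weak Σ-rigid with respect to a finite family Σ = {σ₁,…,σₙ} of ring endomorphisms of R. If a, b ∈ R satisfy ab ∈ nil(R), then a·σ^α(b) ∈ nil(R) and σ^β(a)·b ∈ nil(R) for all α, β ∈ ℕⁿ. -/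
lemma sigmaPow_isRingHom {R : Type*} [Ring R] : ∀ {n : ℕ} (σ : Fin n → R →+* R)
    (θ : Fin n → ℕ), ∃ f : R →+* R, sigmaPow σ θ = ⇑f := by
  intro n
  induction n with
  | zero => exact fun σ θ => ⟨RingHom.id R, rfl⟩
  | succ m ih =>
    intro σ θ
    obtain ⟨g, hg⟩ := ih (fun i => σ i.succ) (fun i => θ i.succ)
    refine ⟨((σ 0) ^ (θ 0)).comp g, ?_⟩
    funext r
    have : sigmaPow σ θ r = (σ 0)^[θ 0] (sigmaPow (fun i => σ i.succ) (fun i => θ i.succ) r) := by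
      simp [sigmaPow, Fin.foldr_succ]
    rw [this, hg]
    simp [RingHom.coe_pow]

lemma nilp_swap {R : Type*} [Ring R] {x y : R} (h : IsNilpotent (x * y)) :
    IsNilpotent (y * x) := by
  obtain ⟨k, hk⟩ := h
  refine ⟨k + 1, ?_⟩
  have key : ∀ m : ℕ, (y * x) ^ (m + 1) = y * (x * y) ^ m * x := by
    intro m
    induction m with
    | zero => simp
    | succ t iht => rw [pow_succ, iht, pow_succ]; simp [mul_assoc]
  rw [key k, hk, mul_zero, zero_mul]

lemma aux_nil {R : Type*} [Ring R] {n : ℕ} (σ : Fin n → R →+* R)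
    (I : TwoSidedIdeal R) (hNI : ∀ x : R, x ∈ I ↔ IsNilpotent x)
    (hweak : ∀ (a : R) (θ : Fin n → ℕ), IsNilpotent (a * sigmaPow σ θ a) ↔ IsNilpotent a)
    (a b : R) (hba : IsNilpotent (b * a)) (α : Fin n → ℕ) :
    IsNilpotent (a * sigmaPow σ α b) := by
  obtain ⟨f, hf⟩ := sigmaPow_isRingHom σ α
  set u := a * sigmaPow σ α b with hu
  have hfba : IsNilpotent (f (b * a)) := by
    obtain ⟨k, hk⟩ := hba
    exact ⟨k, by rw [← map_pow, hk, map_zero]⟩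
  have hmem : f (b * a) ∈ I := (hNI _).mpr hfba
  have h1 : a * (f (b * a) * f (f b)) ∈ I := I.mul_mem_left _ _ (I.mul_mem_right _ _ hmem)
  have h2 : u * sigmaPow σ α u = a * (f (b * a) * f (f b)) := by
    rw [hu, hf, map_mul, map_mul]
    simp [mul_assoc]
  have : IsNilpotent (u * sigmaPow σ α u) := by rw [h2]; exact (hNI _).mp h1
  exact (hweak u α).mp this

/-- If `R` is an NI ring (its nilpotent elements form a two-sided ideal) which is weak
`Σ`-rigid, and `ab ∈ nil(R)`, then `a·σ^α(b) ∈ nil(R)` and `σ^β(a)·b ∈ nil(R)` for all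
`α, β ∈ ℕⁿ`. -/
theorem stmt_3 {R : Type*} [Ring R] {n : ℕ} (σ : Fin n → R →+* R)
    (I : TwoSidedIdeal R) (hNI : ∀ x : R, x ∈ I ↔ IsNilpotent x)
    (hweak : ∀ (a : R) (θ : Fin n → ℕ), IsNilpotent (a * sigmaPow σ θ a) ↔ IsNilpotent a)
    (a b : R) (hab : IsNilpotent (a * b)) :
    (∀ α : Fin n → ℕ, IsNilpotent (a * sigmaPow σ α b)) ∧
      (∀ β : Fin n → ℕ, IsNilpotent (sigmaPow σ β a * b)) := by
  have hba : IsNilpotent (b * a) := nilp_swap hab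
  constructor
  · exact fun α => aux_nil σ I hNI hweak a b hba α
  · exact fun β => nilp_swap (aux_nil σ I hNI hweak b a hab β)
end

section
/- Let R be an NI ring which is weak Σ-rigid with respect to a finite family Σ = {σ₁,…,σₙ} of ring endomorphisms of R. If a, b ∈ R satisfy σ^α(a)·b ∈ nil(R) for some α ∈ ℕⁿ, then ab ∈ nil(R) and ba ∈ nil(R). -/
lemma sigmaPow_mul {R : Type*} [Ring R] : ∀ {n : ℕ} (σ : Fin n → R →+* R)
    (θ : Fin n → ℕ) (x y : R),
    sigmaPow σ θ (x * y) = sigmaPow σ θ x * sigmaPow σ θ y := by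
  intro n
  induction n with
  | zero => intro σ θ x y; simp [sigmaPow]
  | succ m ih =>
    intro σ θ x y
    simp only [sigmaPow, Fin.foldr_succ]
    rw [show (Fin.foldr m (fun i x => (σ i.succ)^[θ i.succ] x) (x * y))
        = sigmaPow (fun i => σ i.succ) (fun i => θ i.succ) (x * y) from rfl,
      ih (fun i => σ i.succ) (fun i => θ i.succ) x y, iterate_map_mul]
    rfl

/-- If `R` is an NI ring (its nilpotent elements form a two-sided ideal) which is weak
`Σ`-rigid, and `σ^α(a)·b ∈ nil(R)` for some `α ∈ ℕⁿ`, then `ab ∈ nil(R)` and `ba ∈ nil(R)`. -/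
theorem stmt_4 {R : Type*} [Ring R] {n : ℕ} (σ : Fin n → R →+* R)
    (I : TwoSidedIdeal R) (hNI : ∀ x : R, x ∈ I ↔ IsNilpotent x)
    (hweak : ∀ (a : R) (θ : Fin n → ℕ), IsNilpotent (a * sigmaPow σ θ a) ↔ IsNilpotent a)
    (a b : R) (α : Fin n → ℕ) (h : IsNilpotent (sigmaPow σ α a * b)) :
    IsNilpotent (a * b) ∧ IsNilpotent (b * a) := by
  -- σ^α(a) * b ∈ I
  have h1 : sigmaPow σ α a * b ∈ I := (hNI _).2 h
  -- a * σ^α(b) * (σ^α(a) * b) ∈ I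
  have h2 : (a * sigmaPow σ α b) * (sigmaPow σ α a * b) ∈ I := I.mul_mem_left _ _ h1
  have h3 : IsNilpotent ((a * sigmaPow σ α b) * (sigmaPow σ α a * b)) := (hNI _).1 h2
  have h4 : IsNilpotent (b * a * sigmaPow σ α (b * a)) := by
    rw [sigmaPow_mul]
    have h5 := nilp_swap h3
    have e : sigmaPow σ α a * b * (a * sigmaPow σ α b)
        = sigmaPow σ α a * (b * a * sigmaPow σ α b) := by simp [mul_assoc]
    rw [e] at h5
    have h6 := nilp_swap h5
    rwa [mul_assoc] at h6
  have hba : IsNilpotent (b * a) := (hweak (b * a) α).1 h4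
  exact ⟨nilp_swap hba, hba⟩
end

section
/- Let R be an NI ring which is weak Σ-rigid with respect to a finite family Σ = {σ₁,…,σₙ} of ring endomorphisms of R. Then σᵢ(e) = e for every 1 ≤ i ≤ n and every central idempotent element e of R. -/
lemma sigmaPow_single {R : Type*} [Ring R] : ∀ {n : ℕ} (σ : Fin n → R →+* R) (i : Fin n) (r : R),
    sigmaPow σ (fun j => if j = i then 1 else 0) r = σ i r := by
  intro n
  induction n with
  | zero => intro σ i; exact i.elim0
  | succ n ih =>
      intro σ i r
      induction i using Fin.cases with
      | zero =>
          simp only [sigmaPow, Fin.foldr_succ]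
          have h1 : (fun (j : Fin n) (x : R) =>
              (σ j.succ)^[if j.succ = (0 : Fin (n+1)) then 1 else 0] x) = fun j x => x := by
            funext j x
            simp [Fin.succ_ne_zero]
          rw [h1]
          have h2 : Fin.foldr n (fun (j : Fin n) (x : R) => x) r = r := by
            have := sigmaPow_zero (fun j : Fin n => σ j.succ) r
            simpa [sigmaPow] using this
          rw [h2]
          simp
      | succ k =>
          simp only [sigmaPow, Fin.foldr_succ]
          have h1 : (fun (j : Fin n) (x : R) =>
              (σ j.succ)^[if j.succ = Fin.succ k then 1 else 0] x) =
              fun (j : Fin n) (x : R) => (σ j.succ)^[if j = k then 1 else 0] x := by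
            funext j x
            simp [Fin.succ_inj]
          rw [h1]
          have h2 := ih (fun j : Fin n => σ j.succ) k r
          simp only [sigmaPow] at h2
          rw [h2]
          have : (0 : Fin (n+1)) ≠ Fin.succ k := (Fin.succ_ne_zero k).symm
          simp [this]

/-- If `R` is an NI ring (its nilpotent elements form a two-sided ideal) which is weak
`Σ`-rigid, then `σᵢ(e) = e` for every `i` and every central idempotent `e` of `R`. -/
theorem stmt_6 {R : Type*} [Ring R] {n : ℕ} (σ : Fin n → R →+* R)
    (I : TwoSidedIdeal R) (hNI : ∀ x : R, x ∈ I ↔ IsNilpotent x)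
    (hweak : ∀ (a : R) (θ : Fin n → ℕ), IsNilpotent (a * sigmaPow σ θ a) ↔ IsNilpotent a)
    (e : R) (he : IsIdempotentElem e) (hcentral : ∀ r : R, e * r = r * e) :
    ∀ i : Fin n, σ i e = e := by
  intro i
  set s : R := σ i e with hs_def
  set t : R := σ i s with ht_def
  have hee : e * e = e := he
  have hss : s * s = s := by rw [hs_def, ← map_mul, hee]
  -- Step A: e * s = e
  have hes : e * s = e := by
    set a : R := e - e * s with ha_def
    have hσa : σ i a = s - s * t := by rw [ha_def, map_sub, map_mul]
    have key : a * σ i a = 0 := by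
      rw [ha_def, hσa]
      have expand : (e - e * s) * (s - s * t) =
          e * s - e * (s * t) - (e * s) * s + (e * s) * (s * t) := by noncomm_ring
      have m1 : (e * s) * s = e * s := by rw [mul_assoc, hss]
      have m2 : (e * s) * (s * t) = e * (s * t) := by
        rw [mul_assoc, ← mul_assoc s s t, hss]
      rw [expand, m1, m2]
      abel
    have hanil : IsNilpotent a := by
      have h := hweak a (fun j => if j = i then 1 else 0)
      rw [sigmaPow_single σ i a, key] at h
      exact h.mp IsNilpotent.zero
    have haidem : IsIdempotentElem a := by
      show a * a = a
      rw [ha_def]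
      have expand : (e - e * s) * (e - e * s) =
          e * e - e * (e * s) - (e * s) * e + (e * s) * (e * s) := by noncomm_ring
      have j1 : e * (e * s) = e * s := by rw [← mul_assoc, hee]
      have j2 : (e * s) * e = e * s := by
        rw [mul_assoc, ← hcentral s, ← mul_assoc, hee]
      have j3 : (e * s) * (e * s) = e * s := by
        rw [← mul_assoc (e*s) e s, j2, mul_assoc, hss]
      rw [expand, j1, j2, j3, hee]
      abel
    have ha0 : a = 0 := haidem.eq_zero_of_isNilpotent hanil
    rw [ha_def] at ha0
    exact (sub_eq_zero.mp ha0).symm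
  have hse : s * e = e := by rw [← hcentral s]; exact hes
  have hst : s * t = s := by
    rw [show s * t = σ i (e * s) from (map_mul (σ i) e s).symm, hes]
  -- Step B: s = e
  set b : R := s - s * e with hb_def
  have hσb : σ i b = t - t * s := by rw [hb_def, map_sub, map_mul]
  have key : b * σ i b = 0 := by
    rw [hb_def, hσb]
    have expand : (s - s * e) * (t - t * s) =
        s * t - s * (t * s) - (s * e) * t + (s * e) * (t * s) := by noncomm_ring
    have h1 : s * (t * s) = s := by rw [← mul_assoc, hst, hss]
    have h2 : (s * e) * t = t * e := by rw [hse, hcentral t]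
    have h3 : (s * e) * (t * s) = t * e := by
      rw [hse, hcentral (t * s), mul_assoc, hse]
    rw [expand, h1, h2, h3, hst]
    abel
  have hbnil : IsNilpotent b := by
    have h := hweak b (fun j => if j = i then 1 else 0)
    rw [sigmaPow_single σ i b, key] at h
    exact h.mp IsNilpotent.zero
  have hbidem : IsIdempotentElem b := by
    show b * b = b
    rw [hb_def]
    have expand : (s - s * e) * (s - s * e) =
        s * s - s * (s * e) - (s * e) * s + (s * e) * (s * e) := by noncomm_ring
    have k1 : s * (s * e) = e := by rw [← mul_assoc, hss, hse]
    have k2 : (s * e) * s = e := by rw [hse, hes]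
    have k3 : (s * e) * (s * e) = e := by rw [hse, hee]
    rw [expand, k1, k2, k3, hss, hse]
    abel
  have hb0 : b = 0 := hbidem.eq_zero_of_isNilpotent hbnil
  rw [hb_def, hse] at hb0
  exact sub_eq_zero.mp hb0
end

section
/- Let R be an NI ring. Then R is weak Armendariz: whenever polynomials f = Σᵢ aᵢxⁱ and g = Σⱼ bⱼxʲ in the polynomial ring R[x] satisfy fg = 0, the product aᵢbⱼ is a nilpotent element of R for all i and j. (This is the instance of Theorem 4.4 of the paper for the skew PBW extension R[x] with identity endomorphism and zero derivation; the identity endomorphism makes R trivially weak Σ-rigid.) -/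
/-!
Modulo the ideal `I = nil(R)` the ring is reduced, and reduced rings are Armendariz: in a reduced
ring `ab = 0` forces `ba = 0` and `arb = 0`, which lets one kill the coefficients `aᵢbⱼ` of
`fg = 0` by induction on `i + j` and, for fixed `i + j`, on `j`. Reading this in `R ⧸ I` gives
`aᵢbⱼ ∈ I`.
-/

open Polynomial Finset.HasAntidiagonal

namespace IsReduced

variable {R : Type*} [Ring R] [IsReduced R] {a b : R}

theorem mul_eq_zero_comm : a * b = 0 ↔ b * a = 0 := by
  have key : ∀ x y : R, x * y = 0 → y * x = 0 := fun x y h ↦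
    sq_eq_zero_iff.mp <| by rw [sq, mul_assoc, ← mul_assoc x, h, zero_mul, mul_zero]
  exact ⟨key a b, key b a⟩

theorem mul_mul_eq_zero (h : a * b = 0) (r : R) : a * r * b = 0 :=
  sq_eq_zero_iff.mp <| by
    rw [sq, mul_assoc, ← mul_assoc b, ← mul_assoc b, mul_eq_zero_comm.mp h,
      zero_mul, zero_mul, mul_zero]

theorem mul_eq_zero_of_mul_mul_eq_zero (h : a * b * b = 0) : a * b = 0 :=
  sq_eq_zero_iff.mp <| by
    rw [sq, mul_assoc, mul_eq_zero_comm.mp h, mul_zero]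

end IsReduced

namespace Polynomial

variable {R : Type*} [Ring R] [IsReduced R] {f g : R[X]}

theorem coeff_mul_coeff_eq_zero_of_lower (hfg : f * g = 0) {k m : ℕ} (hm : m ≤ k)
    (hlower : ∀ i j, i + j < k → f.coeff i * g.coeff j = 0)
    (hsame : ∀ j < m, f.coeff (k - j) * g.coeff j = 0) :
    f.coeff (k - m) * g.coeff m = 0 := by
  apply IsReduced.mul_eq_zero_of_mul_mul_eq_zero
  -- right-multiplying the `k`-th coefficient of `fg` by `bₘ` leaves only the term `aₖ₋ₘbₘbₘ`
  have hsum : ∑ p ∈ antidiagonal k, f.coeff p.1 * g.coeff p.2 * g.coeff m = 0 := by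
    rw [← Finset.sum_mul, ← coeff_mul, hfg, coeff_zero, zero_mul]
  rwa [Finset.sum_eq_single_of_mem (k - m, m) (by simp [hm])] at hsum
  rintro ⟨i, j⟩ hij hne
  rw [mem_antidiagonal] at hij
  rcases lt_trichotomy j m with hj | rfl | hj
  · rw [show i = k - j by omega, hsame j hj, zero_mul]
  · exact absurd (by rw [show i = k - j by omega]) hne
  · exact IsReduced.mul_mul_eq_zero (hlower i m (by omega)) _

theorem coeff_mul_coeff_eq_zero_of_mul_eq_zero (hfg : f * g = 0) (i j : ℕ) :
    f.coeff i * g.coeff j = 0 := by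
  induction hk : i + j using Nat.strong_induction_on generalizing i j with
  | _ k ihk =>
    induction j using Nat.strong_induction_on generalizing i with
    | _ m ihm =>
      obtain rfl : i = k - m := by omega
      exact coeff_mul_coeff_eq_zero_of_lower hfg (by omega)
        (fun i j hij ↦ ihk _ hij i j rfl) (fun j hj ↦ ihm j hj (k - j) (by omega))

end Polynomial

namespace TwoSidedIdeal

variable {R : Type*} [Ring R] (I : TwoSidedIdeal R)

theorem mem_iff_mk'_eq_zero {x : R} : x ∈ I ↔ I.ringCon.mk' x = 0 := by
  rw [← mem_ker, ker_ringCon_mk']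

theorem isReduced_quotient (hI : ∀ (x : R) (n : ℕ), x ^ n ∈ I → x ∈ I) :
    IsReduced I.ringCon.Quotient where
  eq_zero := by
    intro y ⟨n, hn⟩
    obtain ⟨x, rfl⟩ := I.ringCon.mk'_surjective y
    rw [← map_pow, ← mem_iff_mk'_eq_zero] at hn
    exact I.mem_iff_mk'_eq_zero.mp (hI x n hn)

theorem coeff_mul_coeff_mem_of_mul_eq_zero (hI : ∀ (x : R) (n : ℕ), x ^ n ∈ I → x ∈ I)
    {f g : R[X]} (hfg : f * g = 0) (i j : ℕ) : f.coeff i * g.coeff j ∈ I := by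
  have := I.isReduced_quotient hI
  have hmap : f.map I.ringCon.mk' * g.map I.ringCon.mk' = 0 := by
    rw [← Polynomial.map_mul, hfg, Polynomial.map_zero]
  have hcoeff := coeff_mul_coeff_eq_zero_of_mul_eq_zero hmap i j
  rwa [coeff_map, coeff_map, ← map_mul, ← mem_iff_mk'_eq_zero] at hcoeff

end TwoSidedIdeal

/-- If `R` is an NI ring (its nilpotent elements form a two-sided ideal), then `R` is weak
Armendariz: whenever `f·g = 0` in `R[x]`, every product of a coefficient of `f` with a
coefficient of `g` is nilpotent. -/
theorem stmt_8 {R : Type*} [Ring R]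
    (I : TwoSidedIdeal R) (hNI : ∀ x : R, x ∈ I ↔ IsNilpotent x)
    (f g : Polynomial R) (hfg : f * g = 0) :
    ∀ i j : ℕ, IsNilpotent (f.coeff i * g.coeff j) := by
  have hI : ∀ (x : R) (n : ℕ), x ^ n ∈ I → x ∈ I := fun x n hx ↦
    (hNI x).mpr (((hNI _).mp hx).of_pow)
  exact fun i j ↦ (hNI _).mp (I.coeff_mul_coeff_mem_of_mul_eq_zero hI hfg i j)
end

section
/- Let R be an NI ring and n a positive integer. Then whenever f, g in the multivariate polynomial ring R[x₁,…,xₙ] satisfy fg = 0, the product a·b of any coefficient a of f with any coefficient b of g is a nilpotent element of R. (This is the instance of Theorem 4.4 of the paper for the skew PBW extension R[x₁,…,xₙ] with all endomorphisms the identity, all derivations zero, and all commutation constants c_{i,j} = 1; the identity endomorphisms make R trivially weak Σ-rigid.) -/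
/-!
Modulo the ideal of nilpotents, `R` becomes a reduced ring, and over a reduced ring the product
of two polynomials vanishes only if all products of their coefficients do (reduced rings are
Armendariz). For the latter, order the monomials and show `a_p b_q = 0` by induction on
`(p + q, q)` lexicographically: right-multiplying the vanishing `(p + q)`-th coefficient of
`f g` by `b_q` kills every term except `a_p b_q b_q`, and in a reduced ring
`a b b = 0` forces `a b = 0`.
-/

section IsReduced

variable {S : Type*} [Ring S] [IsReduced S] {a b : S}

theorem IsReduced.eq_zero_of_mul_self_eq_zero (h : a * a = 0) : a = 0 :=
  IsReduced.eq_zero a ⟨2, by rw [sq, h]⟩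

theorem IsReduced.mul_eq_zero_symm (h : a * b = 0) : b * a = 0 :=
  IsReduced.eq_zero_of_mul_self_eq_zero <| by
    rw [mul_assoc, ← mul_assoc a, h, zero_mul, mul_zero]

theorem IsReduced.mul_mul_eq_zero_of_mul_eq_zero (h : a * b = 0) (r : S) : a * r * b = 0 :=
  IsReduced.eq_zero_of_mul_self_eq_zero <| by
    rw [show a * r * b * (a * r * b) = a * r * (b * a) * r * b by noncomm_ring,
      IsReduced.mul_eq_zero_symm h, mul_zero, zero_mul, zero_mul]

theorem IsReduced.mul_eq_zero_of_mul_mul_self_eq_zero (h : a * b * b = 0) : a * b = 0 :=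
  IsReduced.eq_zero_of_mul_self_eq_zero <| by
    rw [mul_assoc, IsReduced.mul_eq_zero_symm h, mul_zero]

end IsReduced

namespace AddMonoidAlgebra

variable {R M : Type*}

theorem coeff_mul_eq_sum_filter [Semiring R] [Add M] [DecidableEq M] (f g : R[M]) (k : M) :
    (f * g).coeff k = ∑ p ∈ f.coeff.support ×ˢ g.coeff.support with p.1 + p.2 = k,
      f.coeff p.1 * g.coeff p.2 := by
  rw [coeff_mul, Finset.sum_filter, Finset.sum_product]
  rfl

theorem coeff_mul_coeff_eq_zero_of_mul_eq_zero [Ring R] [IsReduced R] [AddCommMonoid M]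
    [LinearOrder M] [IsOrderedCancelAddMonoid M] [WellFoundedLT M] {f g : R[M]}
    (hfg : f * g = 0) (p q : M) : f.coeff p * g.coeff q = 0 := by
  classical
  induction hx : toLex (p + q, q) using WellFoundedLT.induction generalizing p q with
  | ind x ih =>
  subst hx
  have hlt : ∀ a b, a + b < p + q ∨ a + b = p + q ∧ b < q → f.coeff a * g.coeff b = 0 :=
    fun a b hab ↦ ih _ (Prod.Lex.toLex_lt_toLex.2 hab) a b rfl
  apply IsReduced.mul_eq_zero_of_mul_mul_self_eq_zero
  have hsum : ∑ x ∈ f.coeff.support ×ˢ g.coeff.support with x.1 + x.2 = p + q,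
      f.coeff x.1 * g.coeff x.2 * g.coeff q = 0 := by
    rw [← Finset.sum_mul, ← coeff_mul_eq_sum_filter, hfg, coeff_zero, Finsupp.coe_zero,
      Pi.zero_apply, zero_mul]
  rwa [Finset.sum_eq_single (p, q)] at hsum
  · rintro ⟨a, b⟩ hab hne
    have habpq : a + b = p + q := (Finset.mem_filter.1 hab).2
    rcases lt_trichotomy b q with hbq | rfl | hqb
    · rw [hlt a b (.inr ⟨habpq, hbq⟩), zero_mul]
    · exact absurd (by rw [add_right_cancel habpq]) hne
    · have hap : a + q < p + q := by rw [← habpq]; gcongr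
      exact IsReduced.mul_mul_eq_zero_of_mul_eq_zero (hlt a q (.inl hap)) _
  · intro hpq
    obtain hp | hq : f.coeff p = 0 ∨ g.coeff q = 0 := by
      by_contra! h
      exact hpq (Finset.mem_filter.2 ⟨Finset.mem_product.2 ⟨Finsupp.mem_support_iff.2 h.1,
        Finsupp.mem_support_iff.2 h.2⟩, rfl⟩)
    · rw [hp, zero_mul, zero_mul]
    · rw [hq, mul_zero]

end AddMonoidAlgebra

namespace TwoSidedIdeal

variable {R : Type*} [Ring R]

theorem ringCon_mk'_eq_zero_iff (I : TwoSidedIdeal R) {x : R} : I.ringCon.mk' x = 0 ↔ x ∈ I := by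
  rw [← mem_ker, ker_ringCon_mk']

theorem isReduced_quotient_of_forall_mem_iff_isNilpotent (I : TwoSidedIdeal R)
    (hI : ∀ x, x ∈ I ↔ IsNilpotent x) : IsReduced I.ringCon.Quotient where
  eq_zero y := by
    obtain ⟨x, rfl⟩ := I.ringCon.mk'_surjective y
    rintro ⟨k, hk⟩
    rw [← map_pow, ringCon_mk'_eq_zero_iff, hI] at hk
    rw [ringCon_mk'_eq_zero_iff, hI]
    exact hk.of_pow

end TwoSidedIdeal

theorem stmt_9_general {R : Type*} [Ring R] (n : ℕ)
    (I : TwoSidedIdeal R) (hNI : ∀ x : R, x ∈ I ↔ IsNilpotent x)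
    (f g : AddMonoidAlgebra R (Fin n →₀ ℕ)) (hfg : f * g = 0) :
    ∀ m m' : Fin n →₀ ℕ, IsNilpotent (f.coeff m * g.coeff m') := by
  intro m m'
  have := I.isReduced_quotient_of_forall_mem_iff_isNilpotent hNI
  let π := AddMonoidAlgebra.mapRingHom (Fin n →₀ ℕ) I.ringCon.mk'
  have hπ : π f * π g = 0 := by rw [← map_mul, hfg, map_zero]
  -- The lexicographic order on exponents is a monomial order.
  have hcoeff := AddMonoidAlgebra.coeff_mul_coeff_eq_zero_of_mul_eq_zero
    (M := Lex (Fin n →₀ ℕ)) hπ (toLex m) (toLex m')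
  rw [← hNI, ← I.ringCon_mk'_eq_zero_iff, map_mul]
  exact hcoeff

/-- If `R` is an NI ring (its nilpotent elements form a two-sided ideal) and `n` is a positive
integer, then whenever `f·g = 0` in the polynomial ring `R[x₁,…,xₙ]` in `n` central commuting
variables (realized as the monoid algebra of `R` over the additive monoid `Fin n →₀ ℕ` of
exponent multi-indices), the product of any coefficient of `f` with any coefficient of `g`
is nilpotent. -/
theorem stmt_9 {R : Type*} [Ring R] (n : ℕ) (hn : 0 < n)
    (I : TwoSidedIdeal R) (hNI : ∀ x : R, x ∈ I ↔ IsNilpotent x)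
    (f g : AddMonoidAlgebra R (Fin n →₀ ℕ)) (hfg : f * g = 0) :
    ∀ m m' : Fin n →₀ ℕ, IsNilpotent (f.coeff m * g.coeff m') :=
  stmt_9_general n I hNI f g hfg
end

section
/- Let R be a ring with a ring endomorphism σ such that R is σ-rigid (a·σ(a) = 0 implies a = 0 for a ∈ R). Let M be a 3×3 matrix over R of the form M = [[a, b, c], [0, a, d], [0, 0, a]] with a, b, c, d ∈ R, and let σ̄(M) denote the matrix obtained by applying σ entrywise. Then M·σ̄(M) is a nilpotent matrix if and only if M is a nilpotent matrix. (This expresses that the ring R₃ of such matrices is weak σ̄-rigid.) -/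
section Aux

variable {R : Type*} [Ring R] (σ : R →+* R)

lemma rigid_sq_zero (hrigid : ∀ a : R, a * σ a = 0 → a = 0)
    (a : R) (h : a * a = 0) : a = 0 := by
  have h1 : (a * σ a) * σ (a * σ a) = 0 := by
    rw [map_mul]
    have : a * σ a * (σ a * σ (σ a)) = a * (σ (a * a) * σ (σ a)) := by
      rw [map_mul]; simp [mul_assoc]
    rw [this, h, map_zero, zero_mul, mul_zero]
  exact hrigid a (hrigid _ h1)

lemma rigid_reduced (hrigid : ∀ a : R, a * σ a = 0 → a = 0)
    (a : R) (n : ℕ) (h : a ^ n = 0) : a = 0 := by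
  induction n using Nat.strong_induction_on generalizing a with
  | _ n ih =>
    match n, h with
    | 0, h =>
      have h1 : (1 : R) = 0 := by simpa using h
      calc a = a * 1 := (mul_one a).symm
        _ = 0 := by rw [h1, mul_zero]
    | 1, h => simpa using h
    | (m+2), h =>
      have hsq : (a ^ (m+1)) * (a ^ (m+1)) = 0 := by
        rw [← pow_add]
        have : m + 1 + (m + 1) = (m + 2) + m := by ring
        rw [this, pow_add, h, zero_mul]
      exact ih (m+1) (by omega) a (rigid_sq_zero σ hrigid _ hsq)

lemma pow_diag0 (U : Matrix (Fin 3) (Fin 3) R) (h1 : U 1 0 = 0) (h2 : U 2 0 = 0)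
    (n : ℕ) : (U ^ n) 0 0 = (U 0 0) ^ n := by
  induction n with
  | zero => simp
  | succ n ih =>
    rw [pow_succ, pow_succ, Matrix.mul_apply, Fin.sum_univ_three, h1, h2, ih]
    simp

end Aux

/-- Let `R` be `σ`-rigid and let `M = [[a,b,c],[0,a,d],[0,0,a]]` be a `3×3` matrix over `R`.
Then `M · σ̄(M)` is nilpotent iff `M` is nilpotent, where `σ̄` applies `σ` entrywise. -/
theorem stmt_10 {R : Type*} [Ring R] (σ : R →+* R)
    (hrigid : ∀ a : R, a * σ a = 0 → a = 0)
    (a b c d : R) (M : Matrix (Fin 3) (Fin 3) R)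
    (hM : M = !![a, b, c; 0, a, d; 0, 0, a]) :
    IsNilpotent (M * M.map σ) ↔ IsNilpotent M := by
  subst hM
  have hmap : (!![a, b, c; 0, a, d; 0, 0, a] : Matrix (Fin 3) (Fin 3) R).map σ
      = !![σ a, σ b, σ c; 0, σ a, σ d; 0, 0, σ a] := by
    ext i j
    fin_cases i <;> fin_cases j <;> simp [Matrix.vecHead, Matrix.vecTail]
  rw [hmap]
  have hprod : (!![a, b, c; 0, a, d; 0, 0, a] : Matrix (Fin 3) (Fin 3) R) *
      !![σ a, σ b, σ c; 0, σ a, σ d; 0, 0, σ a]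
      = !![a * σ a, a * σ b + b * σ a, a * σ c + b * σ d + c * σ a;
           0, a * σ a, a * σ d + d * σ a;
           0, 0, a * σ a] := by
    ext i j
    fin_cases i <;> fin_cases j <;>
      simp [Matrix.mul_apply, Fin.sum_univ_three, Matrix.vecHead, Matrix.vecTail]
  rw [hprod]
  constructor
  · rintro ⟨n, hn⟩
    have h00 := pow_diag0
      (!![a * σ a, a * σ b + b * σ a, a * σ c + b * σ d + c * σ a;
          0, a * σ a, a * σ d + d * σ a; 0, 0, a * σ a])
      (by simp [Matrix.vecHead, Matrix.vecTail]) (by simp [Matrix.vecHead, Matrix.vecTail]) n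
    rw [hn] at h00
    have hpow : (a * σ a) ^ n = 0 := by
      have : ((0 : Matrix (Fin 3) (Fin 3) R)) 0 0 = 0 := rfl
      simpa [this] using h00.symm
    have ha : a = 0 := hrigid a (rigid_reduced σ hrigid _ n hpow)
    subst ha
    refine ⟨3, ?_⟩
    ext i j
    fin_cases i <;> fin_cases j <;>
      simp [pow_succ, Matrix.mul_apply, Fin.sum_univ_three, Matrix.vecHead, Matrix.vecTail]
  · rintro ⟨n, hn⟩
    have h00 := pow_diag0
      (!![a, b, c; 0, a, d; 0, 0, a]) (by simp [Matrix.vecHead, Matrix.vecTail]) (by simp [Matrix.vecHead, Matrix.vecTail]) n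
    rw [hn] at h00
    have hpow : a ^ n = 0 := by
      have : ((0 : Matrix (Fin 3) (Fin 3) R)) 0 0 = 0 := rfl
      simpa [this] using h00.symm
    have ha : a = 0 := rigid_reduced σ hrigid _ n hpow
    subst ha
    refine ⟨2, ?_⟩
    ext i j
    fin_cases i <;> fin_cases j <;>
      simp [pow_succ, Matrix.mul_apply, Fin.sum_univ_three, Matrix.vecHead, Matrix.vecTail]
end
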